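/- Let n ≥ 3, k an integer with 1 < k < n/2, and p > (n+2)k/(n-2k). Then every regular solution u of the initial value problem -(1/k)·C(n-1,k-1)·(r^{n-k}|u'(r)|^{k-1}u'(r))' = r^{n-1}·u(r)^p, u > 0, u'(0) = 0, u(0) = ρ > 0, satisfies u(r) ≍ r^{-2k/(p-k)} for large r; that is, there exist constants C > 1 and R > 0 such that 1/C ≤ u(r)·r^{2k/(p-k)} ≤ C for all r ≥ R. -/

import Mathlib

open MeasureTheory Real Set Filter Asymptotics

noncomputable section

namespace KHessianPaper

/-- The binomial coefficient `C(n-1, k-1)` as a real number. -/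
def binomC (n k : ℕ) : ℝ := ((n - 1).choose (k - 1) : ℝ)

/-- The flux `w(r) = r^{n-k} |u'(r)|^{k-1} u'(r)`. -/
def flux (n k : ℕ) (u : ℝ → ℝ) (r : ℝ) : ℝ :=
  r ^ (n - k) * |deriv u r| ^ (k - 1) * deriv u r

/-- `u` is a regular solution of the radial `k`-Hessian initial value problem
`-(1/k) C(n-1,k-1) (r^{n-k} |u'|^{k-1} u')' = r^{n-1} u^p`, `u > 0`, `u'(0) = 0`, `u(0) = ρ`. -/
structure IsRegularSolution (n k : ℕ) (p ρ : ℝ) (u : ℝ → ℝ) : Prop where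
  contDiffOn : ContDiffOn ℝ 1 u (Ici 0)
  deriv_zero : derivWithin u (Ici 0) 0 = 0
  init : u 0 = ρ
  pos : ∀ r : ℝ, 0 ≤ r → 0 < u r
  eqn : ∀ r : ℝ, 0 < r →
    HasDerivAt (flux n k u) (-((k : ℝ) / binomC n k) * r ^ (n - 1) * u r ^ p) r
  radial_smooth : ContDiff ℝ 2 (fun x : EuclideanSpace ℝ (Fin n) => -u ‖x‖)

/-- `φ : [0,∞) → ℝ` is the radial profile of a smooth compactly supported function on `ℝⁿ`. -/
def MemWStar (n : ℕ) (φ : ℝ → ℝ) : Prop :=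
  ∃ Φ : EuclideanSpace ℝ (Fin n) → ℝ,
    ContDiff ℝ (⊤ : ℕ∞) Φ ∧ HasCompactSupport Φ ∧ ∀ x, Φ x = φ ‖x‖

/-- The weak form of the equation tested against `φ`. -/
def WeakEqn (n k : ℕ) (p : ℝ) (u φ : ℝ → ℝ) : Prop :=
  ∫ r in Ioi (0 : ℝ),
      ((1 / (k : ℝ)) * binomC n k * r ^ (n - k) * |deriv u r| ^ (k - 1) * deriv u r
          * deriv φ r
        - r ^ (n - 1) * u r ^ p * φ r) = 0

/-- The second-variation quadratic form `Q_u(φ)`. -/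
def Qform (n k : ℕ) (p : ℝ) (u φ : ℝ → ℝ) : ℝ :=
  binomC n k * ∫ r in Ioi (0 : ℝ), r ^ (n - k) * |deriv u r| ^ (k - 1) * (deriv φ r) ^ 2
    - p * ∫ r in Ioi (0 : ℝ), r ^ (n - 1) * u r ^ (p - 1) * (φ r) ^ 2

/-- `u` is a positive stable solution of the radial `k`-Hessian equation. -/
def IsStableSolution (n k : ℕ) (p : ℝ) (u : ℝ → ℝ) : Prop :=
  (∀ r : ℝ, 0 < r → 0 < u r) ∧ ContDiffOn ℝ 1 u (Ioi 0) ∧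
  (∀ φ, MemWStar n φ → WeakEqn n k p u φ) ∧
  (∀ φ, MemWStar n φ → 0 ≤ Qform n k p u φ)

/-- `u` is a positive stable solution on `(R,∞)` of the radial `k`-Hessian equation. -/
def IsStableSolutionOn (n k : ℕ) (p : ℝ) (R : ℝ) (u : ℝ → ℝ) : Prop :=
  (∀ r : ℝ, 0 < r → 0 < u r) ∧ ContDiffOn ℝ 1 u (Ioi 0) ∧
  (∀ φ, MemWStar n φ → WeakEqn n k p u φ) ∧
  (∀ φ : ℝ → ℝ, ContDiff ℝ (⊤ : ℕ∞) φ → HasCompactSupport φ → tsupport φ ⊆ Ioi R →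
    0 ≤ Qform n k p u φ)

/-- The constant `A` in the singular solution `u_s(r) = A r^{-2k/(p-k)}`. -/
def Aconst (n k : ℕ) (p : ℝ) : ℝ :=
  ((1 / (k : ℝ)) * binomC n k) ^ (1 / (p - k))
    * (2 * (k : ℝ) / (p - (k : ℝ))) ^ ((k : ℝ) / (p - k))
    * ((n : ℝ) - 2 * p * k / (p - k)) ^ (1 / (p - k))

/-- The singular solution `u_s(r) = A r^{-2k/(p-k)}`. -/
def uSing (n k : ℕ) (p : ℝ) (r : ℝ) : ℝ := Aconst n k p * r ^ (-(2 * (k : ℝ) / (p - k)))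

/-- The Joseph–Lundgren exponent (finite form, relevant when `n > 2k+8`). -/
def pJL (n k : ℕ) : ℝ :=
  ((k : ℝ) * ((n : ℝ) ^ 2 - 2 * ((k : ℝ) + 3) * (n : ℝ) + 4 * (k : ℝ))
      + 4 * (k : ℝ) * Real.sqrt (2 * ((k : ℝ) + 1) * (n : ℝ) - 4 * (k : ℝ)))
    / (((n : ℝ) - 2 * (k : ℝ)) * ((n : ℝ) - 2 * (k : ℝ) - 8))

/-- The exponent `p* = k(n+2k)/(n-2k)`. -/
def pStar (n k : ℕ) : ℝ := (k : ℝ) * ((n : ℝ) + 2 * (k : ℝ)) / ((n : ℝ) - 2 * (k : ℝ))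

/-!
Write `v = -u' > 0`, `φ = u r^{2k/(p-k)}` (`rescaled`) and `ζ = r v / u` (`logSlope`).
The Pohozaev function `P` vanishes at `0` and satisfies `P' = -D r^{n-k} v^{k+1}` with `D > 0`
exactly in the supercritical range, so `P < 0`. This gives `ζ < n(k+1)/(k(p+1)) < (n-2k)/k`
and `r^k u^p ≲ v^k`, which together bound `φ` from above.

For the lower bound, `r φ'/φ = 2k/(p-k) - ζ` and
`r ζ' = ζ² - ((n-2k)/k) ζ + φ^{p-k} / (C(n-1,k-1) ζ^{k-1})`. While `φ` is below a small
threshold and `ζ ≥ k/(p-k)`, `ζ` decreases at a fixed rate in `log r`, so within a bounded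
factor of `r` it falls below `k/(p-k)`; it cannot come back while `φ` stays small, and below
that barrier `φ` increases. Since `φ r^{n(k+1)/(k(p+1))}` is nondecreasing, `φ` loses at most a
bounded factor before this happens.
-/

open Topology

theorem neg_of_hasDerivAt_neg_of_tendsto_zero {f f' : ℝ → ℝ}
    (hf : ∀ r, 0 < r → HasDerivAt f (f' r) r) (hf' : ∀ r, 0 < r → f' r < 0)
    (h0 : Tendsto f (𝓝[>] 0) (𝓝 0)) {r : ℝ} (hr : 0 < r) : f r < 0 := by
  have hanti : StrictAntiOn f (Ioi 0) :=
    strictAntiOn_of_deriv_neg (convex_Ioi 0)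
      (fun x hx => (hf x hx).continuousAt.continuousWithinAt)
      (fun x hx => by rw [interior_Ioi] at hx; rw [(hf x hx).deriv]; exact hf' x hx)
  have hhalf : f (r / 2) ≤ 0 := ge_of_tendsto h0 <| by
    filter_upwards [Ioo_mem_nhdsGT (half_pos hr)] with s hs
    exact (hanti hs.1 (half_pos hr) hs.2).le
  exact (hanti (half_pos hr) hr (half_lt_self hr)).trans_le hhalf

theorem binomC_pos {n k : ℕ} (hkn : k ≤ n) : 0 < binomC n k :=
  Nat.cast_pos.2 (Nat.choose_pos (by omega))

structure Supercritical (n k : ℕ) (p : ℝ) : Prop where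
  k_pos : 0 < k
  two_mul_lt : 2 * k < n
  lt_exponent : ((n : ℝ) + 2) * k / ((n : ℝ) - 2 * k) < p

def logSlopeBound (n k : ℕ) (p : ℝ) : ℝ := n * (k + 1) / (k * (p + 1))

def decayExp (k : ℕ) (p : ℝ) : ℝ := 2 * k / (p - k)

-- On the strip `decayExp k p / 2 ≤ ζ < logSlopeBound n k p`, the quadratic part of `r ζ'` is at
-- most `-2 * stripRate`, and `stripThreshold` makes its last term at most `stripRate` there.
-- So `ζ` decreases at rate `stripRate` in `log r`, which it can do for at most a factor
-- `windowRatio`.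
def stripRate (n k : ℕ) (p : ℝ) : ℝ :=
  decayExp k p / 4 * ((n - 2 * k) / k - logSlopeBound n k p)

def stripThreshold (n k : ℕ) (p : ℝ) : ℝ :=
  (binomC n k * stripRate n k p * (decayExp k p / 2) ^ (k - 1)) ^ (p - k)⁻¹

def windowRatio (n k : ℕ) (p : ℝ) : ℝ := exp (logSlopeBound n k p / stripRate n k p)

def upperConst (n k : ℕ) (p : ℝ) : ℝ :=
  (n * binomC n k / k * logSlopeBound n k p ^ k) ^ (p - k)⁻¹

namespace Supercritical

variable {n k : ℕ} {p : ℝ} (hs : Supercritical n k p)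
include hs

theorem k_lt_n : k < n := by have := hs.two_mul_lt; omega

theorem cast_k_pos : (0 : ℝ) < k := by exact_mod_cast hs.k_pos

theorem sub_two_mul_pos : (0 : ℝ) < n - 2 * k := by
  have : ((2 * k : ℕ) : ℝ) < n := by exact_mod_cast hs.two_mul_lt
  push_cast at this
  linarith

theorem k_lt_p : (k : ℝ) < p := by
  have h := hs.lt_exponent
  rw [div_lt_iff₀ hs.sub_two_mul_pos] at h
  by_contra! hpk
  nlinarith [hs.cast_k_pos, mul_le_mul_of_nonneg_right hpk hs.sub_two_mul_pos.le]

theorem logSlopeBound_pos : 0 < logSlopeBound n k p := by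
  have := hs.cast_k_pos
  have := hs.k_lt_p
  have : (0 : ℝ) < n := by linarith [hs.sub_two_mul_pos]
  unfold logSlopeBound
  exact div_pos (by positivity) (mul_pos (by positivity) (by linarith))

theorem logSlopeBound_lt : logSlopeBound n k p < (n - 2 * k) / k := by
  have h := hs.lt_exponent
  have := hs.cast_k_pos
  have := hs.k_lt_p
  rw [div_lt_iff₀ hs.sub_two_mul_pos] at h
  unfold logSlopeBound
  rw [div_lt_div_iff₀ (by nlinarith) hs.cast_k_pos]
  nlinarith

theorem decayExp_pos : 0 < decayExp k p :=
  div_pos (by linarith [hs.cast_k_pos]) (sub_pos.2 hs.k_lt_p)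

theorem stripRate_pos : 0 < stripRate n k p :=
  mul_pos (by linarith [hs.decayExp_pos]) (sub_pos.2 hs.logSlopeBound_lt)

theorem stripThreshold_pos : 0 < stripThreshold n k p := by
  have := binomC_pos hs.k_lt_n.le
  have := hs.stripRate_pos
  have := hs.decayExp_pos
  unfold stripThreshold
  positivity

theorem one_lt_windowRatio : 1 < windowRatio n k p :=
  Real.one_lt_exp_iff.2 (div_pos hs.logSlopeBound_pos hs.stripRate_pos)

theorem strip_estimate {z φ : ℝ} (hz : decayExp k p / 2 ≤ z) (hzL : z < logSlopeBound n k p)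
    (hφ0 : 0 ≤ φ) (hφ : φ ≤ stripThreshold n k p) :
    z ^ 2 - (n - 2 * k) / k * z + φ ^ (p - k) / (binomC n k * z ^ (k - 1))
      ≤ -stripRate n k p := by
  have ha := hs.decayExp_pos
  have hc := hs.stripRate_pos
  have hB := binomC_pos hs.k_lt_n.le
  have hz0 : 0 < z := by linarith
  have hquad : z ^ 2 - (n - 2 * k) / k * z ≤ -2 * stripRate n k p := by
    have := mul_le_mul hz
      (by linarith : (n - 2 * k) / k - logSlopeBound n k p ≤ (n - 2 * k) / k - z)
      (sub_pos.2 hs.logSlopeBound_lt).le hz0.le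
    rw [stripRate]
    nlinarith
  have hφpow : φ ^ (p - k) ≤ binomC n k * stripRate n k p * (decayExp k p / 2) ^ (k - 1) := by
    rwa [stripThreshold, le_rpow_inv_iff_of_pos hφ0 (by positivity) (sub_pos.2 hs.k_lt_p)] at hφ
  have hrest : φ ^ (p - k) / (binomC n k * z ^ (k - 1)) ≤ stripRate n k p := by
    rw [div_le_iff₀ (by positivity)]
    calc φ ^ (p - k) ≤ binomC n k * stripRate n k p * (decayExp k p / 2) ^ (k - 1) := hφpow
      _ ≤ binomC n k * stripRate n k p * z ^ (k - 1) := by gcongr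
      _ = stripRate n k p * (binomC n k * z ^ (k - 1)) := by ring
  linarith

end Supercritical

def pohozaev (n k : ℕ) (p : ℝ) (u : ℝ → ℝ) (r : ℝ) : ℝ :=
  binomC n k / (k + 1) * (r ^ (n - k + 1) * (-deriv u r) ^ (k + 1))
    + r ^ n * u r ^ (p + 1) / (p + 1)
    - n * binomC n k / (k * (p + 1)) * (r ^ (n - k) * (-deriv u r) ^ k * u r)

def rescaled (k : ℕ) (p : ℝ) (u : ℝ → ℝ) (r : ℝ) : ℝ := u r * r ^ decayExp k p

def logSlope (u : ℝ → ℝ) (r : ℝ) : ℝ := r * -deriv u r / u r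

theorem rescaled_rpow {k : ℕ} {p : ℝ} {u : ℝ → ℝ} {r : ℝ} (hpk : p ≠ k) (hr : 0 < r)
    (hu : 0 < u r) : rescaled k p u r ^ (p - k) = u r ^ p / u r ^ k * r ^ (2 * k) := by
  rw [rescaled, Real.mul_rpow hu.le (Real.rpow_nonneg hr.le _), ← Real.rpow_mul hr.le,
    decayExp, div_mul_cancel₀ _ (sub_ne_zero.2 hpk), Real.rpow_sub hu, Real.rpow_natCast,
    ← Real.rpow_natCast r (2 * k)]
  push_cast
  rfl

namespace IsRegularSolution

variable {n k : ℕ} {p ρ : ℝ} {u : ℝ → ℝ}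

theorem hasDerivAt (hu : IsRegularSolution n k p ρ u) {r : ℝ} (hr : 0 < r) :
    HasDerivAt u (deriv u r) r :=
  ((hu.contDiffOn.differentiableOn one_ne_zero).differentiableAt (Ici_mem_nhds hr)).hasDerivAt

theorem tendsto_nhdsGT_zero (hu : IsRegularSolution n k p ρ u) :
    Tendsto u (𝓝[>] 0) (𝓝 (u 0)) :=
  (hu.contDiffOn.continuousOn 0 self_mem_Ici).tendsto.mono_left
    (nhdsWithin_mono 0 Ioi_subset_Ici_self)

theorem tendsto_deriv (hu : IsRegularSolution n k p ρ u) :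
    Tendsto (deriv u) (𝓝[>] 0) (𝓝 0) := by
  have hcont : ContinuousWithinAt (derivWithin u (Ici 0)) (Ici 0) 0 :=
    hu.contDiffOn.continuousOn_derivWithin (uniqueDiffOn_Ici 0) le_rfl 0 self_mem_Ici
  rw [ContinuousWithinAt, hu.deriv_zero] at hcont
  refine (hcont.mono_left (nhdsWithin_mono 0 Ioi_subset_Ici_self)).congr' ?_
  filter_upwards [self_mem_nhdsWithin] with r hr
  exact derivWithin_of_mem_nhds (Ici_mem_nhds hr)

theorem tendsto_flux (hu : IsRegularSolution n k p ρ u) :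
    Tendsto (flux n k u) (𝓝[>] 0) (𝓝 0) := by
  have h := ((((continuous_pow (n - k)).tendsto (0 : ℝ)).mono_left nhdsWithin_le_nhds).mul
    (hu.tendsto_deriv.abs.pow (k - 1))).mul hu.tendsto_deriv
  rw [mul_zero] at h
  exact h

theorem deriv_neg (hu : IsRegularSolution n k p ρ u) (hk : 0 < k) (hkn : k ≤ n) {r : ℝ}
    (hr : 0 < r) : deriv u r < 0 := by
  have hflux : flux n k u r < 0 := by
    refine neg_of_hasDerivAt_neg_of_tendsto_zero (fun s hs => hu.eqn s hs) (fun s hs => ?_)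
      hu.tendsto_flux hr
    have := Real.rpow_pos_of_pos (hu.pos s hs.le) p
    have := binomC_pos hkn
    have : (0 : ℝ) < k := by exact_mod_cast hk
    have : 0 < (k : ℝ) / binomC n k * s ^ (n - 1) * u s ^ p := by positivity
    linarith
  by_contra! h
  exact hflux.not_ge (mul_nonneg (by positivity) h)

theorem neg_flux_eq (hu : IsRegularSolution n k p ρ u) (hk : 0 < k) (hkn : k ≤ n) {r : ℝ}
    (hr : 0 < r) : -flux n k u r = r ^ (n - k) * (-deriv u r) ^ k := by
  obtain ⟨j, rfl⟩ : ∃ j, k = j + 1 := ⟨k - 1, by omega⟩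
  rw [flux, abs_of_neg (hu.deriv_neg hk hkn hr), Nat.add_sub_cancel]
  ring

theorem hasDerivAt_neg_deriv (hu : IsRegularSolution n k p ρ u) (hk : 0 < k) (hkn : k < n)
    {r : ℝ} (hr : 0 < r) :
    HasDerivAt (fun s => -deriv u s)
      (r ^ (k - 1) * u r ^ p / (binomC n k * (-deriv u r) ^ (k - 1))
        - ((n : ℝ) - k) / k * (-deriv u r) / r) r := by
  have hv : ∀ s, 0 < s → 0 < -deriv u s := fun s hs => neg_pos.2 (hu.deriv_neg hk hkn.le hs)
  have hpow : ∀ s, 0 < s → -flux n k u s / s ^ (n - k) = (-deriv u s) ^ k := fun s hs => by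
    rw [hu.neg_flux_eq hk hkn.le hs]; field_simp
  have hq : HasDerivAt (fun s => -flux n k u s / s ^ (n - k)) _ r :=
    (hu.eqn r hr).neg.div (hasDerivAt_pow (n - k) r) (pow_ne_zero _ hr.ne')
  have hy := hq.rpow_const (p := (k : ℝ)⁻¹)
    (Or.inl (by rw [hpow r hr]; exact (pow_pos (hv r hr) k).ne'))
  -- `-u'` is the `k`-th root of `-flux / r^(n-k)`
  refine (hy.congr_of_eventuallyEq ?_).congr_deriv ?_
  · filter_upwards [Ioi_mem_nhds hr] with s hs
    rw [hpow s hs, Real.pow_rpow_inv_natCast (hv s hs).le hk.ne']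
  · have hw := hv r hr
    simp only [Pi.neg_apply]
    rw [hpow r hr, hu.neg_flux_eq hk hkn.le hr, Real.rpow_sub_one (pow_pos hw k).ne',
      Real.pow_rpow_inv_natCast hw.le hk.ne']
    have hB := (binomC_pos hkn.le).ne'
    generalize -deriv u r = w at hw ⊢
    obtain ⟨j, rfl⟩ : ∃ j, k = j + 1 := ⟨k - 1, by omega⟩
    obtain ⟨m, rfl⟩ : ∃ m, n = j + 1 + m + 1 := ⟨n - (j + 1) - 1, by omega⟩
    simp only [Nat.add_sub_cancel, show j + 1 + m + 1 - (j + 1) = m + 1 by omega,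
      show j + 1 + m + 1 - 1 = j + 1 + m by omega]
    field_simp
    push_cast
    ring

theorem hasDerivAt_pohozaev (hu : IsRegularSolution n k p ρ u) (hk : 0 < k) (hkn : k < n)
    (hp : p + 1 ≠ 0) {r : ℝ} (hr : 0 < r) :
    HasDerivAt (pohozaev n k p u)
      (-(binomC n k / (k + 1) * ((n - 2 * k) / k - logSlopeBound n k p))
        * (r ^ (n - k) * (-deriv u r) ^ (k + 1))) r := by
  have hv := hu.hasDerivAt_neg_deriv hk hkn hr
  have hu' := hu.hasDerivAt hr
  have hP := ((((hasDerivAt_pow (n - k + 1) r).mul (hv.pow (k + 1))).const_mul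
    (binomC n k / (k + 1))).add (((hasDerivAt_pow n r).mul
      (hu'.rpow_const (p := p + 1) (Or.inl (hu.pos r hr.le).ne'))).div_const (p + 1))).sub
    ((((hasDerivAt_pow (n - k) r).mul (hv.pow k)).mul hu').const_mul
      (n * binomC n k / (k * (p + 1))))
  refine hP.congr_deriv ?_
  simp only [Pi.mul_apply, Pi.pow_apply, add_sub_cancel_right]
  have hB := (binomC_pos hkn.le).ne'
  have hw := (neg_pos.2 (hu.deriv_neg hk hkn.le hr)).ne'
  have hu0 := (hu.pos r hr.le).ne'
  generalize hwdef : -deriv u r = w at hw ⊢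
  rw [show deriv u r = -w by linarith, Real.rpow_add_one hu0]
  generalize u r ^ p = U
  obtain ⟨j, rfl⟩ : ∃ j, k = j + 1 := ⟨k - 1, by omega⟩
  obtain ⟨m, rfl⟩ : ∃ m, n = j + 1 + m + 1 := ⟨n - (j + 1) - 1, by omega⟩
  simp only [Nat.add_sub_cancel, show j + 1 + m + 1 - (j + 1) = m + 1 by omega,
    show j + 1 + m + 1 - 1 = j + 1 + m by omega]
  unfold logSlopeBound
  field_simp
  push_cast
  ring

theorem tendsto_pohozaev (hu : IsRegularSolution n k p ρ u) (hk : 0 < k) (hn : 0 < n) :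
    Tendsto (pohozaev n k p u) (𝓝[>] 0) (𝓝 0) := by
  have hw : Tendsto (fun r => -deriv u r) (𝓝[>] 0) (𝓝 0) := by
    simpa using hu.tendsto_deriv.neg
  have hpow (m : ℕ) : Tendsto (fun r : ℝ => r ^ m) (𝓝[>] 0) (𝓝 (0 ^ m)) :=
    ((continuous_pow m).tendsto 0).mono_left nhdsWithin_le_nhds
  have hup : Tendsto (fun r => u r ^ (p + 1)) (𝓝[>] 0) (𝓝 (u 0 ^ (p + 1))) :=
    (Real.continuousAt_rpow_const _ _ (Or.inl (hu.pos 0 le_rfl).ne')).tendsto.comp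
      hu.tendsto_nhdsGT_zero
  have h := ((((hpow (n - k + 1)).mul (hw.pow (k + 1))).const_mul (binomC n k / (k + 1))).add
    (((hpow n).mul hup).div_const (p + 1))).sub
    ((((hpow (n - k)).mul (hw.pow k)).mul hu.tendsto_nhdsGT_zero).const_mul
      (n * binomC n k / (k * (p + 1))))
  convert h using 2
  · rfl
  · simp [hk.ne', hn.ne']

theorem logSlope_pos (hu : IsRegularSolution n k p ρ u) (hk : 0 < k) (hkn : k ≤ n) {r : ℝ}
    (hr : 0 < r) : 0 < logSlope u r :=
  div_pos (mul_pos hr (neg_pos.2 (hu.deriv_neg hk hkn hr))) (hu.pos r hr.le)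

theorem rescaled_pos (hu : IsRegularSolution n k p ρ u) {r : ℝ} (hr : 0 < r) :
    0 < rescaled k p u r :=
  mul_pos (hu.pos r hr.le) (Real.rpow_pos_of_pos hr _)

theorem hasDerivAt_rescaled (hu : IsRegularSolution n k p ρ u) {r : ℝ} (hr : 0 < r) :
    HasDerivAt (rescaled k p u)
      (rescaled k p u r * (decayExp k p - logSlope u r) / r) r := by
  refine ((hu.hasDerivAt hr).mul (Real.hasDerivAt_rpow_const (Or.inl hr.ne'))).congr_deriv ?_
  have hur := (hu.pos r hr.le).ne'
  rw [rescaled, logSlope, Real.rpow_sub_one hr.ne']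
  field_simp
  ring

theorem hasDerivAt_logSlope (hu : IsRegularSolution n k p ρ u) (hk : 0 < k) (hkn : k < n)
    (hpk : p ≠ k) {r : ℝ} (hr : 0 < r) :
    HasDerivAt (logSlope u)
      ((logSlope u r ^ 2 - (n - 2 * k) / k * logSlope u r
        + rescaled k p u r ^ (p - k) / (binomC n k * logSlope u r ^ (k - 1))) / r) r := by
  have hur := hu.pos r hr.le
  refine (((hasDerivAt_id r).mul (hu.hasDerivAt_neg_deriv hk hkn hr)).div (hu.hasDerivAt hr)
    hur.ne').congr_deriv ?_
  simp only [Pi.mul_apply, id]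
  rw [rescaled_rpow hpk hr hur, logSlope]
  have hu0 := hur.ne'
  have hB := (binomC_pos hkn.le).ne'
  have hw := (neg_pos.2 (hu.deriv_neg hk hkn.le hr)).ne'
  generalize hwdef : -deriv u r = w at hw ⊢
  rw [show deriv u r = -w by linarith]
  generalize u r ^ p = U
  generalize u r = V at hu0 ⊢
  obtain ⟨j, rfl⟩ : ∃ j, k = j + 1 := ⟨k - 1, by omega⟩
  simp only [Nat.add_sub_cancel, div_pow, mul_pow]
  field_simp
  push_cast
  ring

theorem monotoneOn_rescaled_mul_rpow (hu : IsRegularSolution n k p ρ u) {c x y : ℝ}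
    (hx : 0 < x) (h : ∀ r ∈ Ioo x y, logSlope u r ≤ decayExp k p + c) :
    MonotoneOn (fun r => rescaled k p u r * r ^ c) (Icc x y) := by
  have hd : ∀ r, 0 < r → HasDerivAt (fun r => rescaled k p u r * r ^ c)
      (rescaled k p u r * r ^ c * (decayExp k p + c - logSlope u r) / r) r := fun r hr =>
    ((hu.hasDerivAt_rescaled hr).mul (Real.hasDerivAt_rpow_const (Or.inl hr.ne'))).congr_deriv
      (by rw [Real.rpow_sub_one hr.ne']; field_simp; ring)
  refine monotoneOn_of_deriv_nonneg (convex_Icc x y)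
    (fun r hr => (hd r (hx.trans_le hr.1)).continuousAt.continuousWithinAt)
    (fun r hr => ?_) (fun r hr => ?_) <;> rw [interior_Icc] at hr
  · exact (hd r (hx.trans hr.1)).differentiableAt.differentiableWithinAt
  · have hr0 := hx.trans hr.1
    rw [(hd r hr0).deriv]
    have := hu.rescaled_pos hr0
    exact div_nonneg (mul_nonneg (by positivity) (by linarith [h r hr])) hr0.le

section Supercritical

variable (hu : IsRegularSolution n k p ρ u) (hs : Supercritical n k p)
include hu hs

theorem pohozaev_neg {r : ℝ} (hr : 0 < r) : pohozaev n k p u r < 0 := by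
  have hp : 0 < p + 1 := by linarith [hs.k_lt_p, hs.cast_k_pos]
  refine neg_of_hasDerivAt_neg_of_tendsto_zero
    (fun s hs' => hu.hasDerivAt_pohozaev hs.k_pos hs.k_lt_n hp.ne' hs') (fun s hs' => ?_)
    (hu.tendsto_pohozaev hs.k_pos (by linarith [hs.k_lt_n])) hr
  have := binomC_pos hs.k_lt_n.le
  have := sub_pos.2 hs.logSlopeBound_lt
  have := neg_pos.2 (hu.deriv_neg hs.k_pos hs.k_lt_n.le hs')
  have := hs.cast_k_pos
  simp only [neg_mul, neg_lt_zero]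
  positivity

theorem logSlope_lt {r : ℝ} (hr : 0 < r) : logSlope u r < logSlopeBound n k p := by
  have hP := hu.pohozaev_neg hs hr
  have hB := binomC_pos hs.k_lt_n.le
  have hk := hs.cast_k_pos
  have hp : 0 < p + 1 := by linarith [hs.k_lt_p]
  have hur := hu.pos r hr.le
  have hw := neg_pos.2 (hu.deriv_neg hs.k_pos hs.k_lt_n.le hr)
  set w := -deriv u r
  set X := r ^ (n - k) * w ^ k
  have hX : 0 < X := by positivity
  have key : binomC n k / (k + 1) * (r * w * X)
      < binomC n k / (k + 1) * (logSlopeBound n k p * u r * X) := by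
    have e1 : binomC n k / (k + 1) * (r ^ (n - k + 1) * w ^ (k + 1))
        = binomC n k / (k + 1) * (r * w * X) := by ring
    have e2 : binomC n k / (k + 1) * (logSlopeBound n k p * u r * X)
        = n * binomC n k / (k * (p + 1)) * (r ^ (n - k) * w ^ k * u r) := by
      unfold logSlopeBound; field_simp; ring
    have : 0 < r ^ n * u r ^ (p + 1) / (p + 1) := by positivity
    rw [pohozaev] at hP
    linarith
  have := lt_of_mul_lt_mul_right (lt_of_mul_lt_mul_left key (by positivity)) hX.le
  rwa [logSlope, div_lt_iff₀ hur]

theorem pow_mul_rpow_lt {r : ℝ} (hr : 0 < r) :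
    r ^ k * u r ^ p < n * binomC n k / k * (-deriv u r) ^ k := by
  have hP := hu.pohozaev_neg hs hr
  have hB := binomC_pos hs.k_lt_n.le
  have hk := hs.cast_k_pos
  have hp : 0 < p + 1 := by linarith [hs.k_lt_p]
  have hur := hu.pos r hr.le
  have hw := neg_pos.2 (hu.deriv_neg hs.k_pos hs.k_lt_n.le hr)
  set w := -deriv u r
  set Y := r ^ (n - k) * u r
  have hY : 0 < Y := by positivity
  have key : 1 / (p + 1) * (r ^ k * u r ^ p * Y)
      < 1 / (p + 1) * (n * binomC n k / k * w ^ k * Y) := by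
    have e1 : r ^ n * u r ^ (p + 1) / (p + 1) = 1 / (p + 1) * (r ^ k * u r ^ p * Y) := by
      rw [← Nat.sub_add_cancel hs.k_lt_n.le, pow_add, Real.rpow_add_one hur.ne']
      ring
    have e2 : n * binomC n k / (k * (p + 1)) * (r ^ (n - k) * w ^ k * u r)
        = 1 / (p + 1) * (n * binomC n k / k * w ^ k * Y) := by
      field_simp; ring
    have : 0 < binomC n k / (k + 1) * (r ^ (n - k + 1) * w ^ (k + 1)) := by positivity
    rw [pohozaev] at hP
    linarith
  exact lt_of_mul_lt_mul_right (lt_of_mul_lt_mul_left key (by positivity)) hY.le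

theorem rescaled_lt_upperConst {r : ℝ} (hr : 0 < r) : rescaled k p u r < upperConst n k p := by
  have hB := binomC_pos hs.k_lt_n.le
  have hk := hs.cast_k_pos
  have hpk := sub_pos.2 hs.k_lt_p
  have hur := hu.pos r hr.le
  have hw := neg_pos.2 (hu.deriv_neg hs.k_pos hs.k_lt_n.le hr)
  have hζ : r * -deriv u r < logSlopeBound n k p * u r := by
    have := hu.logSlope_lt hs hr
    rwa [logSlope, div_lt_iff₀ hur] at this
  have hζk := pow_lt_pow_left₀ hζ (mul_pos hr hw).le hs.k_pos.ne'
  have hn : (0 : ℝ) < n := by exact_mod_cast hs.k_pos.trans hs.k_lt_n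
  have hL := hs.logSlopeBound_pos
  have hφ := hu.rescaled_pos hr
  rw [upperConst, lt_rpow_inv_iff_of_pos hφ.le (by positivity) hpk,
    rescaled_rpow hs.k_lt_p.ne' hr hur, div_mul_eq_mul_div, div_lt_iff₀ (pow_pos hur k)]
  calc u r ^ p * r ^ (2 * k) = r ^ k * (r ^ k * u r ^ p) := by ring
    _ < r ^ k * (n * binomC n k / k * (-deriv u r) ^ k) :=
      mul_lt_mul_of_pos_left (hu.pow_mul_rpow_lt hs hr) (pow_pos hr k)
    _ = n * binomC n k / k * (r * -deriv u r) ^ k := by ring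
    _ < n * binomC n k / k * (logSlopeBound n k p * u r) ^ k :=
      mul_lt_mul_of_pos_left hζk (by positivity)
    _ = n * binomC n k / k * logSlopeBound n k p ^ k * u r ^ k := by ring

theorem logSlope_deriv_le {r : ℝ} (hr : 0 < r) (hζ : decayExp k p / 2 ≤ logSlope u r)
    (hφ : rescaled k p u r ≤ stripThreshold n k p) :
    (logSlope u r ^ 2 - (n - 2 * k) / k * logSlope u r
      + rescaled k p u r ^ (p - k) / (binomC n k * logSlope u r ^ (k - 1))) / r
      ≤ -stripRate n k p / r :=
  div_le_div_of_nonneg_right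
    (hs.strip_estimate hζ (hu.logSlope_lt hs hr) (hu.rescaled_pos hr).le hφ) hr.le

theorem antitoneOn_logSlope_add_log {x y : ℝ} (hx : 0 < x)
    (h : ∀ r ∈ Ioo x y, decayExp k p / 2 ≤ logSlope u r ∧
      rescaled k p u r ≤ stripThreshold n k p) :
    AntitoneOn (fun r => logSlope u r + stripRate n k p * Real.log r) (Icc x y) := by
  have hd : ∀ r, 0 < r →
      HasDerivAt (fun r => logSlope u r + stripRate n k p * Real.log r) _ r :=
    fun r hr => (hu.hasDerivAt_logSlope hs.k_pos hs.k_lt_n hs.k_lt_p.ne' hr).add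
      ((Real.hasDerivAt_log hr.ne').const_mul _)
  refine antitoneOn_of_deriv_nonpos (convex_Icc x y)
    (fun r hr => (hd r (hx.trans_le hr.1)).continuousAt.continuousWithinAt)
    (fun r hr => ?_) (fun r hr => ?_) <;> rw [interior_Icc] at hr
  · exact (hd r (hx.trans hr.1)).differentiableAt.differentiableWithinAt
  · have hr0 := hx.trans hr.1
    rw [(hd r hr0).deriv]
    have := hu.logSlope_deriv_le hs hr0 (h r hr).1 (h r hr).2
    rw [neg_div] at this
    rw [← div_eq_mul_inv]
    linarith

theorem exists_logSlope_lt {x : ℝ} (hx : 0 < x)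
    (hφ : ∀ r ∈ Ioo x (x * windowRatio n k p), rescaled k p u r ≤ stripThreshold n k p) :
    ∃ t ∈ Ioo x (x * windowRatio n k p), logSlope u t < decayExp k p / 2 := by
  by_contra! h
  have hxΛ : x ≤ x * windowRatio n k p :=
    le_mul_of_one_le_right hx.le hs.one_lt_windowRatio.le
  have hanti := hu.antitoneOn_logSlope_add_log hs hx (fun r hr => ⟨h r hr, hφ r hr⟩)
    (left_mem_Icc.2 hxΛ) (right_mem_Icc.2 hxΛ) hxΛ
  have hlog : Real.log (x * windowRatio n k p)
      = Real.log x + logSlopeBound n k p / stripRate n k p := by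
    rw [windowRatio, Real.log_mul hx.ne' (Real.exp_pos _).ne', Real.log_exp]
  simp only [hlog, mul_add, mul_div_cancel₀ _ hs.stripRate_pos.ne'] at hanti
  linarith [hu.logSlope_pos hs.k_pos hs.k_lt_n.le (hx.trans_le hxΛ), hu.logSlope_lt hs hx]

theorem logSlope_le_half_decayExp {x y : ℝ} (hx : 0 < x) (hζ : logSlope u x ≤ decayExp k p / 2)
    (hφ : ∀ r ∈ Icc x y, rescaled k p u r ≤ stripThreshold n k p) :
    ∀ r ∈ Icc x y, logSlope u r ≤ decayExp k p / 2 := by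
  have hd := fun r (hr : 0 < r) =>
    hu.hasDerivAt_logSlope hs.k_pos hs.k_lt_n hs.k_lt_p.ne' hr
  -- at a point where `logSlope` reaches the barrier, it is strictly decreasing
  refine image_le_of_deriv_right_lt_deriv_boundary'
    (fun r hr => (hd r (hx.trans_le hr.1)).continuousAt.continuousWithinAt)
    (fun r hr => (hd r (hx.trans_le hr.1)).hasDerivWithinAt) hζ continuousOn_const
    (fun r _ => hasDerivWithinAt_const r _ _) (fun r hr hr' => ?_)
  have hr0 := hx.trans_le hr.1
  calc _ ≤ -stripRate n k p / r :=
        hu.logSlope_deriv_le hs hr0 hr'.ge (hφ r (Ico_subset_Icc_self hr))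
    _ < 0 := div_neg_of_neg_of_pos (neg_neg_of_pos hs.stripRate_pos) hr0

theorem div_windowRatio_le_rescaled {x y : ℝ} (hx : 0 < x) (hxy : x ≤ y)
    (hyx : y ≤ x * windowRatio n k p) :
    rescaled k p u x / windowRatio n k p ^ logSlopeBound n k p ≤ rescaled k p u y := by
  set L := logSlopeBound n k p
  set Λ := windowRatio n k p
  have hΛ : 0 < Λ := zero_lt_one.trans hs.one_lt_windowRatio
  have hy := hx.trans_le hxy
  have hmono := hu.monotoneOn_rescaled_mul_rpow (c := L) hx
    (fun r hr => by linarith [hu.logSlope_lt hs (hx.trans hr.1), hs.decayExp_pos])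
    (left_mem_Icc.2 hxy) (right_mem_Icc.2 hxy) hxy
  have hpow : y ^ L ≤ x ^ L * Λ ^ L := by
    rw [← Real.mul_rpow hx.le hΛ.le]
    exact Real.rpow_le_rpow hy.le hyx hs.logSlopeBound_pos.le
  have := hu.rescaled_pos hy
  rw [div_le_iff₀ (Real.rpow_pos_of_pos hΛ _)]
  refine le_of_mul_le_mul_right ?_ (Real.rpow_pos_of_pos hx L)
  calc rescaled k p u x * x ^ L ≤ rescaled k p u y * y ^ L := hmono
    _ ≤ rescaled k p u y * (x ^ L * Λ ^ L) := by gcongr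
    _ = rescaled k p u y * Λ ^ L * x ^ L := by ring

theorem stripThreshold_div_le_rescaled {x y : ℝ} (hx : 0 < x) (hxy : x ≤ y)
    (hφx : stripThreshold n k p ≤ rescaled k p u x)
    (hφ : ∀ r ∈ Ioc x y, rescaled k p u r ≤ stripThreshold n k p) :
    stripThreshold n k p / windowRatio n k p ^ logSlopeBound n k p ≤ rescaled k p u y := by
  have hΛ := Real.rpow_pos_of_pos (zero_lt_one.trans hs.one_lt_windowRatio) (logSlopeBound n k p)
  have hwindow {t : ℝ} (hxt : x ≤ t) (htx : t ≤ x * windowRatio n k p) :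
      stripThreshold n k p / windowRatio n k p ^ logSlopeBound n k p ≤ rescaled k p u t :=
    (div_le_div_of_nonneg_right hφx hΛ.le).trans (hu.div_windowRatio_le_rescaled hs hx hxt htx)
  by_cases hyx : y ≤ x * windowRatio n k p
  · exact hwindow hxy hyx
  -- otherwise `logSlope` drops below `decayExp / 2` before `x * windowRatio`, and stays there
  obtain ⟨t, ht, hζt⟩ := hu.exists_logSlope_lt hs hx
    fun r hr => hφ r ⟨hr.1, hr.2.le.trans (not_le.1 hyx).le⟩
  have hty : t ≤ y := ht.2.le.trans (not_le.1 hyx).le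
  have hζ := hu.logSlope_le_half_decayExp hs (hx.trans ht.1) hζt.le
    (fun r hr => hφ r ⟨ht.1.trans_le hr.1, hr.2⟩)
  have hmono := hu.monotoneOn_rescaled_mul_rpow (c := 0) (hx.trans ht.1)
    (fun r hr => by linarith [hζ r (Ioo_subset_Icc_self hr), hs.decayExp_pos])
    (left_mem_Icc.2 hty) (right_mem_Icc.2 hty) hty
  simp only [Real.rpow_zero, mul_one] at hmono
  exact (hwindow ht.1.le ht.2.le).trans hmono

theorem exists_stripThreshold_le_rescaled :
    ∃ x, 0 < x ∧ stripThreshold n k p ≤ rescaled k p u x := by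
  by_contra! h
  set a := decayExp k p / 2 with ha_def
  have ha : 0 < a := half_pos hs.decayExp_pos
  obtain ⟨t, ht, hζt⟩ :=
    hu.exists_logSlope_lt hs one_pos fun r hr => (h r (one_pos.trans hr.1)).le
  have ht0 := one_pos.trans ht.1
  have hgrowth : ∀ y, t ≤ y → rescaled k p u t * t ^ (-a) * y ^ a ≤ rescaled k p u y :=
    fun y hty => by
      have hy := ht0.trans_le hty
      have hζ := hu.logSlope_le_half_decayExp hs (y := y) ht0 hζt.le
        fun r hr => (h r (ht0.trans_le hr.1)).le
      have hmono := hu.monotoneOn_rescaled_mul_rpow (c := -a) ht0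
        (fun r hr => by linarith [hζ r (Ioo_subset_Icc_self hr)])
        (left_mem_Icc.2 hty) (right_mem_Icc.2 hty) hty
      calc _ ≤ rescaled k p u y * y ^ (-a) * y ^ a :=
            mul_le_mul_of_nonneg_right hmono (Real.rpow_pos_of_pos hy _).le
        _ = rescaled k p u y := by
            rw [mul_assoc, ← Real.rpow_add hy, neg_add_cancel, Real.rpow_zero, mul_one]
  have hlim : Tendsto (fun y => rescaled k p u t * t ^ (-a) * y ^ a) atTop atTop :=
    (tendsto_rpow_atTop ha).const_mul_atTop
      (mul_pos (hu.rescaled_pos ht0) (Real.rpow_pos_of_pos ht0 _))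
  obtain ⟨y, hy, hty⟩ :=
    ((hlim.eventually_gt_atTop (stripThreshold n k p)).and (eventually_ge_atTop t)).exists
  exact (h y (ht0.trans_le hty)).not_ge (hy.le.trans (hgrowth y hty))

theorem eventually_stripThreshold_div_le_rescaled :
    ∃ R, 0 < R ∧ ∀ r, R ≤ r →
      stripThreshold n k p / windowRatio n k p ^ logSlopeBound n k p ≤ rescaled k p u r := by
  obtain ⟨x, hx, hφx⟩ := hu.exists_stripThreshold_le_rescaled hs
  refine ⟨x, hx, fun r hxr => ?_⟩
  have hclosed : IsClosed (Icc x r ∩ rescaled k p u ⁻¹' Ici (stripThreshold n k p)) :=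
    ContinuousOn.preimage_isClosed_of_isClosed
      (fun t ht => (hu.hasDerivAt_rescaled (hx.trans_le ht.1)).continuousAt.continuousWithinAt)
      isClosed_Icc isClosed_Ici
  obtain ⟨z, ⟨hz, hφz⟩, hmax⟩ := (isCompact_Icc.of_isClosed_subset hclosed
    inter_subset_left).exists_isGreatest ⟨x, ⟨left_mem_Icc.2 hxr, hφx⟩⟩
  refine hu.stripThreshold_div_le_rescaled hs (hx.trans_le hz.1) hz.2 hφz fun t ht => ?_
  by_contra! h
  exact (hmax ⟨⟨hz.1.trans ht.1.le, ht.2⟩, h.le⟩).not_gt ht.1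

end Supercritical

end IsRegularSolution

theorem decay_rate_supercritical_general (n k : ℕ) (p ρ : ℝ) (u : ℝ → ℝ)
    (hk1 : 1 < k) (hk2 : 2 * k < n)
    (hp : ((n : ℝ) + 2) * k / ((n : ℝ) - 2 * k) < p)
    (hu : IsRegularSolution n k p ρ u) :
    ∃ C : ℝ, 1 < C ∧ ∃ R : ℝ, 0 < R ∧ ∀ r : ℝ, R ≤ r →
      1 / C ≤ u r * r ^ (2 * (k : ℝ) / (p - k)) ∧
      u r * r ^ (2 * (k : ℝ) / (p - k)) ≤ C := by
  have hs : Supercritical n k p := ⟨by omega, hk2, hp⟩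
  obtain ⟨R, hR, hlower⟩ := hu.eventually_stripThreshold_div_le_rescaled hs
  set ε := stripThreshold n k p / windowRatio n k p ^ logSlopeBound n k p
  have hε : 0 < ε := div_pos hs.stripThreshold_pos
    (Real.rpow_pos_of_pos (zero_lt_one.trans hs.one_lt_windowRatio) _)
  have hM : 0 < upperConst n k p := (hu.rescaled_pos hR).trans (hu.rescaled_lt_upperConst hs hR)
  have hC : 0 < 1 / ε := by positivity
  refine ⟨upperConst n k p + 1 / ε + 1, by linarith, R, hR, fun r hr => ⟨?_, ?_⟩⟩
  · exact ((one_div_le (by linarith) hε).2 (by linarith)).trans (hlower r hr)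
  · exact (hu.rescaled_lt_upperConst hs (hR.trans_le hr)).le.trans (by linarith)

/-- in the supercritical case every regular solution satisfies
`u(r) ≍ r^{-2k/(p-k)}` for large `r`. -/
theorem decay_rate_supercritical (n k : ℕ) (p ρ : ℝ) (u : ℝ → ℝ)
    (hn : 3 ≤ n) (hk1 : 1 < k) (hk2 : 2 * k < n) (hρ : 0 < ρ)
    (hp : ((n : ℝ) + 2) * k / ((n : ℝ) - 2 * k) < p)
    (hu : IsRegularSolution n k p ρ u) :
    ∃ C : ℝ, 1 < C ∧ ∃ R : ℝ, 0 < R ∧ ∀ r : ℝ, R ≤ r →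
      1 / C ≤ u r * r ^ (2 * (k : ℝ) / (p - k)) ∧
      u r * r ^ (2 * (k : ℝ) / (p - k)) ≤ C :=
  decay_rate_supercritical_general n k p ρ u hk1 hk2 hp hu

end KHessianPaper
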